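/- arXiv:1503.05413 — 7 statements merged into one kernel-verified Lean document; each statement's English description precedes it below -/
import Mathlib

section
/- De Moivre's formula (timelike vector part case) for left matrices: let u = (u₁, u₂, u₃) satisfy -u₁² + u₂² + u₃² = -1, let ε = u₁i + u₂j + u₃k, N > 0, θ ∈ ℝ, and q = N(cos θ + ε sin θ). Then for every natural number n, (L_q)ⁿ = Nⁿ (cos(nθ) I₄ + sin(nθ) L_ε). -/
open Matrix Real

namespace SplitQuat

noncomputable def L (q : QuaternionAlgebra ℝ (-1) 0 1) : Matrix (Fin 4) (Fin 4) ℝ :=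
  !![q.re, -q.imI, q.imJ, q.imK;
     q.imI, q.re, q.imK, -q.imJ;
     q.imJ, q.imK, q.re, -q.imI;
     q.imK, -q.imJ, q.imI, q.re]

noncomputable def R (q : QuaternionAlgebra ℝ (-1) 0 1) : Matrix (Fin 4) (Fin 4) ℝ :=
  !![q.re, -q.imI, q.imJ, q.imK;
     q.imI, q.re, -q.imK, q.imJ;
     q.imJ, -q.imK, q.re, q.imI;
     q.imK, q.imJ, -q.imI, q.re]

-- Both sides are images of `exp (θ * I) ^ n` under the algebra map `ℂ → A` sending `I` to `E`.
theorem cos_smul_one_add_sin_smul_pow {A : Type*} [Ring A] [Algebra ℝ A] {E : A}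
    (hE : E * E = -1) (θ : ℝ) (n : ℕ) :
    (cos θ • 1 + sin θ • E) ^ n = cos (n * θ) • 1 + sin (n * θ) • E := by
  have h_exp (t : ℝ) :
      Complex.liftAux E hE (Complex.exp (t * Complex.I)) = cos t • 1 + sin t • E := by
    rw [Complex.liftAux_apply, Complex.exp_ofReal_mul_I_re, Complex.exp_ofReal_mul_I_im,
      Algebra.algebraMap_eq_smul_one]
  rw [← h_exp, ← map_pow, ← Complex.exp_nat_mul, ← mul_assoc, ← h_exp]
  push_cast
  rfl

theorem L_pure_mul_self (u₁ u₂ u₃ : ℝ) :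
    L ⟨0, u₁, u₂, u₃⟩ * L ⟨0, u₁, u₂, u₃⟩ = (-u₁ ^ 2 + u₂ ^ 2 + u₃ ^ 2) • 1 := by
  ext i j
  fin_cases i <;> fin_cases j <;>
    simp [L, Matrix.mul_apply, Fin.sum_univ_four] <;> ring

theorem L_mk_polar (N θ u₁ u₂ u₃ : ℝ) :
    L ⟨N * cos θ, N * u₁ * sin θ, N * u₂ * sin θ, N * u₃ * sin θ⟩ =
      N • (cos θ • 1 + sin θ • L ⟨0, u₁, u₂, u₃⟩) := by
  ext i j
  fin_cases i <;> fin_cases j <;> simp [L] <;> ring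

theorem deMoivre_L_timelike_general (u₁ u₂ u₃ : ℝ) (h : -u₁ ^ 2 + u₂ ^ 2 + u₃ ^ 2 = -1)
    (N θ : ℝ)
    (q : QuaternionAlgebra ℝ (-1) 0 1)
    (hq : q = ⟨N * Real.cos θ, N * u₁ * Real.sin θ, N * u₂ * Real.sin θ, N * u₃ * Real.sin θ⟩)
    (n : ℕ) :
    (L q) ^ n = N ^ n • (Real.cos (n * θ) • (1 : Matrix (Fin 4) (Fin 4) ℝ) +
      Real.sin (n * θ) • L ⟨0, u₁, u₂, u₃⟩) := by
  have hε : L ⟨0, u₁, u₂, u₃⟩ * L ⟨0, u₁, u₂, u₃⟩ = -1 := by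
    rw [L_pure_mul_self, h, neg_one_smul]
  rw [hq, L_mk_polar, smul_pow, cos_smul_one_add_sin_smul_pow hε]

theorem deMoivre_L_timelike (u₁ u₂ u₃ : ℝ) (h : -u₁ ^ 2 + u₂ ^ 2 + u₃ ^ 2 = -1)
    (N θ : ℝ) (hN : 0 < N)
    (q : QuaternionAlgebra ℝ (-1) 0 1)
    (hq : q = ⟨N * Real.cos θ, N * u₁ * Real.sin θ, N * u₂ * Real.sin θ, N * u₃ * Real.sin θ⟩)
    (n : ℕ) :
    (L q) ^ n = N ^ n • (Real.cos (n * θ) • (1 : Matrix (Fin 4) (Fin 4) ℝ) +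
      Real.sin (n * θ) • L ⟨0, u₁, u₂, u₃⟩) :=
  deMoivre_L_timelike_general u₁ u₂ u₃ h N θ q hq n

end SplitQuat
end

section
/- De Moivre's formula (spacelike vector part case) for left matrices: let u = (u₁, u₂, u₃) satisfy -u₁² + u₂² + u₃² = 1, let ε = u₁i + u₂j + u₃k, N > 0, θ ∈ ℝ, and q = N(cosh θ + ε sinh θ). Then for every natural number n, (L_q)ⁿ = Nⁿ (cosh(nθ) I₄ + sinh(nθ) L_ε). -/
open Matrix Real

namespace SplitQuat

theorem cosh_smul_one_add_sinh_smul_pow {A : Type*} [Ring A] [Algebra ℝ A] {E : A}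
    (hE : E * E = 1) (θ : ℝ) (n : ℕ) :
    (cosh θ • (1 : A) + sinh θ • E) ^ n = cosh (n * θ) • (1 : A) + sinh (n * θ) • E := by
  induction n with
  | zero => simp
  | succ n ih =>
    rw [pow_succ, ih]
    push_cast
    rw [add_one_mul, cosh_add, sinh_add]
    simp only [add_mul, mul_add, smul_mul_smul, one_mul, mul_one, hE, add_smul, mul_smul]
    module

theorem L_polar (N c s u₁ u₂ u₃ : ℝ) :
    L ⟨N * c, N * u₁ * s, N * u₂ * s, N * u₃ * s⟩ = N • (c • 1 + s • L ⟨0, u₁, u₂, u₃⟩) := by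
  ext i j
  fin_cases i <;> fin_cases j <;> simp [L] <;> ring

theorem deMoivre_L_spacelike_general (u₁ u₂ u₃ : ℝ) (h : -u₁ ^ 2 + u₂ ^ 2 + u₃ ^ 2 = 1)
    (N θ : ℝ)
    (q : QuaternionAlgebra ℝ (-1) 0 1)
    (hq : q = ⟨N * Real.cosh θ, N * u₁ * Real.sinh θ, N * u₂ * Real.sinh θ, N * u₃ * Real.sinh θ⟩)
    (n : ℕ) :
    (L q) ^ n = N ^ n • (Real.cosh (n * θ) • (1 : Matrix (Fin 4) (Fin 4) ℝ) +
      Real.sinh (n * θ) • L ⟨0, u₁, u₂, u₃⟩) := by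
  have hε : L ⟨0, u₁, u₂, u₃⟩ * L ⟨0, u₁, u₂, u₃⟩ = 1 := by
    rw [L_pure_mul_self, h, one_smul]
  rw [hq, L_polar, smul_pow, cosh_smul_one_add_sinh_smul_pow hε]

theorem deMoivre_L_spacelike (u₁ u₂ u₃ : ℝ) (h : -u₁ ^ 2 + u₂ ^ 2 + u₃ ^ 2 = 1)
    (N θ : ℝ) (hN : 0 < N)
    (q : QuaternionAlgebra ℝ (-1) 0 1)
    (hq : q = ⟨N * Real.cosh θ, N * u₁ * Real.sinh θ, N * u₂ * Real.sinh θ, N * u₃ * Real.sinh θ⟩)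
    (n : ℕ) :
    (L q) ^ n = N ^ n • (Real.cosh (n * θ) • (1 : Matrix (Fin 4) (Fin 4) ℝ) +
      Real.sinh (n * θ) • L ⟨0, u₁, u₂, u₃⟩) :=
  deMoivre_L_spacelike_general u₁ u₂ u₃ h N θ q hq n

end SplitQuat
end

section
/- De Moivre's formula (timelike vector part case) for right matrices: let u = (u₁, u₂, u₃) satisfy -u₁² + u₂² + u₃² = -1, let ε = u₁i + u₂j + u₃k, N > 0, θ ∈ ℝ, and q = N(cos θ + ε sin θ). Then for every natural number n, (R_q)ⁿ = Nⁿ (cos(nθ) I₄ + sin(nθ) R_ε). -/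
/-! Right multiplication `R` is an anti-homomorphism from `ℍ[ℝ,-1,1]` to `4 × 4` real matrices, so
`R ε * R ε = R (ε * ε) = R (-u₁² + u₂² + u₃²) = -1`. Hence `i ↦ R ε` defines an `ℝ`-algebra map from
`ℂ`, which transports de Moivre's formula `(cos θ + i sin θ)ⁿ = cos nθ + i sin nθ` to the matrices. -/

open Matrix Real

theorem pow_cos_smul_one_add_sin_smul {A : Type*} [Ring A] [Algebra ℝ A] {e : A}
    (he : e * e = -1) (θ : ℝ) (n : ℕ) :
    (cos θ • (1 : A) + sin θ • e) ^ n = cos (n * θ) • (1 : A) + sin (n * θ) • e := by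
  have h_exp (x : ℝ) :
      Complex.liftAux e he (Complex.exp (x * Complex.I)) = cos x • 1 + sin x • e := by
    rw [Complex.liftAux_apply, Complex.exp_ofReal_mul_I_re, Complex.exp_ofReal_mul_I_im,
      Algebra.algebraMap_eq_smul_one]
  rw [← h_exp, ← map_pow, ← Complex.exp_nat_mul, ← h_exp, Complex.ofReal_mul,
    Complex.ofReal_natCast, mul_assoc]

namespace SplitQuat

open scoped Quaternion

theorem R_add (p q : ℍ[ℝ,-1,1]) : R (p + q) = R p + R q := by
  ext i j; fin_cases i <;> fin_cases j <;> simp [R, add_comm]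

theorem R_smul (c : ℝ) (q : ℍ[ℝ,-1,1]) : R (c • q) = c • R q := by
  ext i j; fin_cases i <;> fin_cases j <;> simp [R]

theorem R_coe (c : ℝ) : R c = c • 1 := by
  ext i j; fin_cases i <;> fin_cases j <;> simp [R]

theorem R_mul (p q : ℍ[ℝ,-1,1]) : R (p * q) = R q * R p := by
  ext i j
  fin_cases i <;> fin_cases j <;> simp [R, Matrix.mul_apply, Fin.sum_univ_four] <;> ring

theorem mk_zero_mul_self (u₁ u₂ u₃ : ℝ) :
    (⟨0, u₁, u₂, u₃⟩ * ⟨0, u₁, u₂, u₃⟩ : ℍ[ℝ,-1,1]) = ↑(-u₁ ^ 2 + u₂ ^ 2 + u₃ ^ 2) := by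
  ext <;> simp only [QuaternionAlgebra.mk_mul_mk, QuaternionAlgebra.re_coe,
    QuaternionAlgebra.imI_coe, QuaternionAlgebra.imJ_coe, QuaternionAlgebra.imK_coe] <;> ring

theorem deMoivre_R_timelike_general (u₁ u₂ u₃ : ℝ) (h : -u₁ ^ 2 + u₂ ^ 2 + u₃ ^ 2 = -1)
    (N θ : ℝ)
    (q : QuaternionAlgebra ℝ (-1) 0 1)
    (hq : q = ⟨N * Real.cos θ, N * u₁ * Real.sin θ, N * u₂ * Real.sin θ, N * u₃ * Real.sin θ⟩)
    (n : ℕ) :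
    (R q) ^ n = N ^ n • (Real.cos (n * θ) • (1 : Matrix (Fin 4) (Fin 4) ℝ) +
      Real.sin (n * θ) • R ⟨0, u₁, u₂, u₃⟩) := by
  set ε : ℍ[ℝ,-1,1] := ⟨0, u₁, u₂, u₃⟩
  have hε : R ε * R ε = -1 := by
    rw [← R_mul, mk_zero_mul_self, h, R_coe, neg_one_smul]
  have hq_polar : q = N • ((cos θ : ℍ[ℝ,-1,1]) + sin θ • ε) := by
    rw [hq]; ext <;> simp [ε] <;> ring
  rw [hq_polar, R_smul, R_add, R_coe, R_smul, smul_pow, pow_cos_smul_one_add_sin_smul hε]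

theorem deMoivre_R_timelike (u₁ u₂ u₃ : ℝ) (h : -u₁ ^ 2 + u₂ ^ 2 + u₃ ^ 2 = -1)
    (N θ : ℝ) (hN : 0 < N)
    (q : QuaternionAlgebra ℝ (-1) 0 1)
    (hq : q = ⟨N * Real.cos θ, N * u₁ * Real.sin θ, N * u₂ * Real.sin θ, N * u₃ * Real.sin θ⟩)
    (n : ℕ) :
    (R q) ^ n = N ^ n • (Real.cos (n * θ) • (1 : Matrix (Fin 4) (Fin 4) ℝ) +
      Real.sin (n * θ) • R ⟨0, u₁, u₂, u₃⟩) :=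
  deMoivre_R_timelike_general u₁ u₂ u₃ h N θ q hq n

end SplitQuat
end

section
/- De Moivre's formula for spacelike split quaternions, even exponent: let u = (u₁, u₂, u₃) satisfy -u₁² + u₂² + u₃² = 1, ε = u₁i + u₂j + u₃k, N > 0, θ ∈ ℝ, and q = N(sinh θ + ε cosh θ). Then for every even natural number n, (L_q)ⁿ = Nⁿ (cosh(nθ) I₄ + sinh(nθ) L_ε). -/
/-!
With `ε = u₁i + u₂j + u₃k`, the spacelike condition says exactly `ε² = 1`. Hence
`q² = N²(cosh 2θ + ε sinh 2θ)`, and the hyperbolic de Moivre formula for a square root of unity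
gives `q²ᵐ = N²ᵐ(cosh 2mθ + ε sinh 2mθ)`. Since `L` is the left regular representation, an
`ℝ`-algebra homomorphism, this identity carries over to `(L q)²ᵐ`.
-/

open Matrix Real

namespace SplitQuat

section Hyperbolic

variable {A : Type*} [Ring A] [Algebra ℝ A] {ε : A}

theorem smul_one_add_smul_mul (hε : ε * ε = 1) (a b c d : ℝ) :
    (a • 1 + b • ε) * (c • 1 + d • ε) = (a * c + b * d) • (1 : A) + (a * d + b * c) • ε := by
  simp only [add_mul, mul_add, smul_mul_smul_comm, one_mul, mul_one, hε]
  module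

theorem sinh_add_cosh_smul_sq (hε : ε * ε = 1) (θ : ℝ) :
    (sinh θ • 1 + cosh θ • ε) ^ 2 = cosh (2 * θ) • (1 : A) + sinh (2 * θ) • ε := by
  rw [sq, smul_one_add_smul_mul hε, cosh_two_mul, sinh_two_mul]
  ring_nf

theorem cosh_add_sinh_smul_pow (hε : ε * ε = 1) (a : ℝ) (n : ℕ) :
    (cosh a • 1 + sinh a • ε) ^ n = cosh (n * a) • (1 : A) + sinh (n * a) • ε := by
  induction n with
  | zero => simp
  | succ n ih =>
    rw [pow_succ, ih, smul_one_add_smul_mul hε, Nat.cast_succ, add_one_mul, cosh_add, sinh_add]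
    ring_nf

end Hyperbolic

noncomputable def L.algHom : QuaternionAlgebra ℝ (-1) 0 1 →ₐ[ℝ] Matrix (Fin 4) (Fin 4) ℝ where
  toFun := L
  map_one' := by
    ext i j
    fin_cases i <;> fin_cases j <;> simp [L, one_apply]
  map_mul' p q := by
    ext i j
    fin_cases i <;> fin_cases j <;> simp [L, mul_apply, Fin.sum_univ_four] <;> ring
  map_zero' := by
    ext i j
    fin_cases i <;> fin_cases j <;> simp [L]
  map_add' p q := by
    ext i j
    fin_cases i <;> fin_cases j <;> simp [L] <;> ring
  commutes' r := by
    ext i j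
    fin_cases i <;> fin_cases j <;> simp [L, algebraMap_eq_diagonal]

@[simp]
theorem L.algHom_apply (q : QuaternionAlgebra ℝ (-1) 0 1) : L.algHom q = L q := rfl

theorem mul_self_eq_one_of_spacelike {u₁ u₂ u₃ : ℝ} (h : -u₁ ^ 2 + u₂ ^ 2 + u₃ ^ 2 = 1) :
    (⟨0, u₁, u₂, u₃⟩ * ⟨0, u₁, u₂, u₃⟩ : QuaternionAlgebra ℝ (-1) 0 1) = 1 := by
  ext <;> simp <;> linarith

theorem deMoivre_L_spacelikeQ_even_general (u₁ u₂ u₃ : ℝ) (h : -u₁ ^ 2 + u₂ ^ 2 + u₃ ^ 2 = 1)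
    (N θ : ℝ)
    (q : QuaternionAlgebra ℝ (-1) 0 1)
    (hq : q = ⟨N * Real.sinh θ, N * u₁ * Real.cosh θ, N * u₂ * Real.cosh θ, N * u₃ * Real.cosh θ⟩)
    (n : ℕ) (hn : Even n) :
    (L q) ^ n = N ^ n • (Real.cosh (n * θ) • (1 : Matrix (Fin 4) (Fin 4) ℝ) +
      Real.sinh (n * θ) • L ⟨0, u₁, u₂, u₃⟩) := by
  set ε : QuaternionAlgebra ℝ (-1) 0 1 := ⟨0, u₁, u₂, u₃⟩
  have hε : ε * ε = 1 := mul_self_eq_one_of_spacelike h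
  have hqε : q = N • (sinh θ • 1 + cosh θ • ε) := by
    subst hq; ext <;> simp [ε] <;> ring
  obtain ⟨m, rfl⟩ := hn.two_dvd
  have hpow : q ^ (2 * m) =
      N ^ (2 * m) • (cosh ((2 * m : ℕ) * θ) • 1 + sinh ((2 * m : ℕ) * θ) • ε) := by
    rw [pow_mul, hqε, smul_pow, sinh_add_cosh_smul_sq hε, smul_pow, ← pow_mul,
      cosh_add_sinh_smul_pow hε]
    push_cast; ring_nf
  rw [← L.algHom_apply, ← map_pow, hpow, map_smul, map_add, map_smul, map_smul, map_one,
    L.algHom_apply]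

theorem deMoivre_L_spacelikeQ_even (u₁ u₂ u₃ : ℝ) (h : -u₁ ^ 2 + u₂ ^ 2 + u₃ ^ 2 = 1)
    (N θ : ℝ) (hN : 0 < N)
    (q : QuaternionAlgebra ℝ (-1) 0 1)
    (hq : q = ⟨N * Real.sinh θ, N * u₁ * Real.cosh θ, N * u₂ * Real.cosh θ, N * u₃ * Real.cosh θ⟩)
    (n : ℕ) (hn : Even n) :
    (L q) ^ n = N ^ n • (Real.cosh (n * θ) • (1 : Matrix (Fin 4) (Fin 4) ℝ) +
      Real.sinh (n * θ) • L ⟨0, u₁, u₂, u₃⟩) :=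
  deMoivre_L_spacelikeQ_even_general u₁ u₂ u₃ h N θ q hq n hn
end SplitQuat
end

section
/- De Moivre's formula for spacelike split quaternions, odd exponent: let u = (u₁, u₂, u₃) satisfy -u₁² + u₂² + u₃² = 1, ε = u₁i + u₂j + u₃k, N > 0, θ ∈ ℝ, and q = N(sinh θ + ε cosh θ). Then for every odd natural number n, (L_q)ⁿ = Nⁿ (sinh(nθ) I₄ + cosh(nθ) L_ε). -/
/-!
If `ε² = 1` in a real algebra, the elements `cosh x + ε sinh x` multiply like `exp x`, so their
`n`-th power is `cosh nx + ε sinh nx`. Since `sinh x + ε cosh x = ε (cosh x + ε sinh x)` and odd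
powers of `ε` equal `ε`, the odd powers of `sinh x + ε cosh x` are `sinh nx + ε cosh nx`. This
applies to the matrix `L ε` of a unit spacelike `ε`, whose square is the identity, and `L q` is
`N (sinh θ + (L ε) cosh θ)`.
-/

open Matrix Real

namespace SplitQuat

theorem pow_of_mul_self_eq_one_of_odd {M : Type*} [Monoid M] {ε : M} (hε : ε * ε = 1) {n : ℕ}
    (hn : Odd n) : ε ^ n = ε := by
  obtain ⟨k, rfl⟩ := hn
  rw [pow_succ, pow_mul, sq, hε, one_pow, one_mul]

section HyperbolicUnit

variable {A : Type*} [Ring A] [Algebra ℝ A] {ε : A}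

theorem cosh_smul_add_sinh_smul_mul (hε : ε * ε = 1) (x y : ℝ) :
    (cosh x • 1 + sinh x • ε) * (cosh y • 1 + sinh y • ε) =
      cosh (x + y) • (1 : A) + sinh (x + y) • ε := by
  simp only [cosh_add, sinh_add, add_mul, mul_add, smul_mul_smul_comm, one_mul, mul_one, hε]
  module

theorem cosh_smul_add_sinh_smul_pow (hε : ε * ε = 1) (x : ℝ) (n : ℕ) :
    (cosh x • 1 + sinh x • ε) ^ n = cosh (n * x) • (1 : A) + sinh (n * x) • ε := by
  induction n with
  | zero => simp
  | succ n ih =>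
    rw [pow_succ, ih, cosh_smul_add_sinh_smul_mul hε, Nat.cast_succ, add_one_mul]

theorem sinh_smul_add_cosh_smul_pow_of_odd (hε : ε * ε = 1) (x : ℝ) {n : ℕ} (hn : Odd n) :
    (sinh x • 1 + cosh x • ε) ^ n = sinh (n * x) • (1 : A) + cosh (n * x) • ε := by
  have hfactor : ∀ y : ℝ, sinh y • 1 + cosh y • ε = ε * (cosh y • (1 : A) + sinh y • ε) := by
    intro y
    rw [mul_add, mul_smul_comm, mul_smul_comm, mul_one, hε]
    abel
  have hcomm : Commute ε (cosh x • (1 : A) + sinh x • ε) :=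
    ((Commute.one_right ε).smul_right _).add_right ((Commute.refl ε).smul_right _)
  rw [hfactor, hfactor, hcomm.mul_pow, pow_of_mul_self_eq_one_of_odd hε hn,
    cosh_smul_add_sinh_smul_pow hε]

end HyperbolicUnit

theorem L_mul_self_of_spacelike {u₁ u₂ u₃ : ℝ} (h : -u₁ ^ 2 + u₂ ^ 2 + u₃ ^ 2 = 1) :
    L ⟨0, u₁, u₂, u₃⟩ * L ⟨0, u₁, u₂, u₃⟩ = 1 := by
  ext i j
  fin_cases i <;> fin_cases j <;>
    simp [L, Matrix.mul_apply, Fin.sum_univ_four] <;> linarith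

theorem L_mk_eq_smul (N a b u₁ u₂ u₃ : ℝ) :
    L ⟨N * a, N * u₁ * b, N * u₂ * b, N * u₃ * b⟩ = N • (a • 1 + b • L ⟨0, u₁, u₂, u₃⟩) := by
  ext i j
  fin_cases i <;> fin_cases j <;> simp [L] <;> ring

theorem deMoivre_L_spacelikeQ_odd_general (u₁ u₂ u₃ : ℝ) (h : -u₁ ^ 2 + u₂ ^ 2 + u₃ ^ 2 = 1)
    (N θ : ℝ)
    (q : QuaternionAlgebra ℝ (-1) 0 1)
    (hq : q = ⟨N * Real.sinh θ, N * u₁ * Real.cosh θ, N * u₂ * Real.cosh θ, N * u₃ * Real.cosh θ⟩)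
    (n : ℕ) (hn : Odd n) :
    (L q) ^ n = N ^ n • (Real.sinh (n * θ) • (1 : Matrix (Fin 4) (Fin 4) ℝ) +
      Real.cosh (n * θ) • L ⟨0, u₁, u₂, u₃⟩) := by
  rw [hq, L_mk_eq_smul, smul_pow,
    sinh_smul_add_cosh_smul_pow_of_odd (L_mul_self_of_spacelike h) θ hn]

theorem deMoivre_L_spacelikeQ_odd (u₁ u₂ u₃ : ℝ) (h : -u₁ ^ 2 + u₂ ^ 2 + u₃ ^ 2 = 1)
    (N θ : ℝ) (hN : 0 < N)
    (q : QuaternionAlgebra ℝ (-1) 0 1)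
    (hq : q = ⟨N * Real.sinh θ, N * u₁ * Real.cosh θ, N * u₂ * Real.cosh θ, N * u₃ * Real.cosh θ⟩)
    (n : ℕ) (hn : Odd n) :
    (L q) ^ n = N ^ n • (Real.sinh (n * θ) • (1 : Matrix (Fin 4) (Fin 4) ℝ) +
      Real.cosh (n * θ) • L ⟨0, u₁, u₂, u₃⟩) :=
  deMoivre_L_spacelikeQ_odd_general u₁ u₂ u₃ h N θ q hq n hn

end SplitQuat
end

section
/- Euler formula for timelike pure unit split quaternions (left matrix): let q = u₁i + u₂j + u₃k with -u₁² + u₂² + u₃² = -1. Then for every θ ∈ ℝ, exp(θ L_q) = cos θ · I₄ + sin θ · L_q, where exp is the matrix exponential. -/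
/-!
For a timelike pure unit split quaternion `q`, the left matrix `L q` squares to `-1`.
Any square root `J` of `-1` in a real normed algebra gives an algebra map `ℂ → 𝔸`, `i ↦ J`; being
continuous it commutes with `exp`, so Euler's formula `exp (θ i) = cos θ + i sin θ` in `ℂ` transports
to `exp (θ J) = cos θ + sin θ J`.
-/

open Matrix Real

namespace SplitQuat

theorem _root_.NormedSpace.exp_smul_of_mul_self_eq_neg_one {𝔸 : Type*} [NormedRing 𝔸]
    [NormedAlgebra ℝ 𝔸] {J : 𝔸} (hJ : J * J = -1) (θ : ℝ) :
    NormedSpace.exp (θ • J) = Real.cos θ • (1 : 𝔸) + Real.sin θ • J := by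
  let φ : ℂ →ₐ[ℝ] 𝔸 := Complex.liftAux J hJ
  have hφ : Continuous φ := by
    have : ⇑φ = fun z : ℂ => algebraMap ℝ 𝔸 z.re + z.im • J := funext (Complex.liftAux_apply J hJ)
    rw [this]
    fun_prop
  have hφI : φ (θ * Complex.I) = θ • J := by simp [φ, Complex.liftAux_apply]
  have hball : (θ * Complex.I : ℂ) ∈ Metric.eball 0 (NormedSpace.expSeries ℝ ℂ).radius :=
    (NormedSpace.expSeries_radius_eq_top ℝ ℂ).symm ▸ edist_lt_top _ _
  rw [← hφI, ← NormedSpace.map_exp_of_mem_ball φ hφ _ hball, ← Complex.exp_eq_exp_ℂ,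
    Complex.exp_mul_I, Complex.liftAux_apply]
  simp [Algebra.algebraMap_eq_smul_one, Complex.cos_ofReal_re, Complex.sin_ofReal_re]

theorem euler_L_timelike (u₁ u₂ u₃ : ℝ) (h : -u₁ ^ 2 + u₂ ^ 2 + u₃ ^ 2 = -1) (θ : ℝ) :
    NormedSpace.exp (θ • L ⟨0, u₁, u₂, u₃⟩) =
      Real.cos θ • (1 : Matrix (Fin 4) (Fin 4) ℝ) + Real.sin θ • L ⟨0, u₁, u₂, u₃⟩ := by
  have hsq : L ⟨0, u₁, u₂, u₃⟩ * L ⟨0, u₁, u₂, u₃⟩ = -1 := by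
    rw [L_pure_mul_self, h, neg_one_smul]
  -- `exp` depends only on the topology, so any algebra norm on matrices will do.
  let _ : NormedRing (Matrix (Fin 4) (Fin 4) ℝ) := Matrix.linftyOpNormedRing
  let _ : NormedAlgebra ℝ (Matrix (Fin 4) (Fin 4) ℝ) := Matrix.linftyOpNormedAlgebra
  exact NormedSpace.exp_smul_of_mul_self_eq_neg_one hsq θ

end SplitQuat
end

section
/- Euler formula for spacelike pure unit split quaternions (right matrix): let q = u₁i + u₂j + u₃k with -u₁² + u₂² + u₃² = 1. Then for every θ ∈ ℝ, exp(θ R_q) = cosh θ · I₄ + sinh θ · R_q. -/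
open Matrix Real

namespace SplitQuat

theorem exp_smul_of_sq_eq_one {𝔸 : Type*} [Ring 𝔸] [Algebra ℝ 𝔸] [TopologicalSpace 𝔸]
    [IsTopologicalRing 𝔸] [ContinuousSMul ℝ 𝔸] [T2Space 𝔸] {a : 𝔸} (ha : a ^ 2 = 1) (θ : ℝ) :
    NormedSpace.exp (θ • a) = cosh θ • (1 : 𝔸) + sinh θ • a := by
  have h_even (k : ℕ) : a ^ (2 * k) = 1 := by rw [pow_mul, ha, one_pow]
  have h_odd (k : ℕ) : a ^ (2 * k + 1) = a := by rw [pow_succ, h_even, one_mul]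
  have h_series :
      HasSum (fun n : ℕ => (n.factorial : ℝ)⁻¹ • (θ • a) ^ n) (cosh θ • 1 + sinh θ • a) := by
    refine HasSum.even_add_odd ?_ ?_
    · convert (hasSum_cosh θ).smul_const (1 : 𝔸) using 2 with k
      rw [smul_pow, h_even, smul_smul, div_eq_inv_mul]
    · convert (hasSum_sinh θ).smul_const a using 2 with k
      rw [smul_pow, h_odd, smul_smul, div_eq_inv_mul]
  rw [NormedSpace.exp_eq_tsum ℝ]
  exact h_series.tsum_eq

theorem R_pure_sq (u₁ u₂ u₃ : ℝ) :
    R ⟨0, u₁, u₂, u₃⟩ ^ 2 = (-u₁ ^ 2 + u₂ ^ 2 + u₃ ^ 2) • (1 : Matrix (Fin 4) (Fin 4) ℝ) := by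
  rw [pow_two]
  ext i j
  fin_cases i <;> fin_cases j <;>
    simp [R, mul_apply, Fin.sum_univ_four] <;> ring

theorem euler_R_spacelike (u₁ u₂ u₃ : ℝ) (h : -u₁ ^ 2 + u₂ ^ 2 + u₃ ^ 2 = 1) (θ : ℝ) :
    NormedSpace.exp (θ • R ⟨0, u₁, u₂, u₃⟩) =
      Real.cosh θ • (1 : Matrix (Fin 4) (Fin 4) ℝ) + Real.sinh θ • R ⟨0, u₁, u₂, u₃⟩ :=
  exp_smul_of_sq_eq_one (by rw [R_pure_sq, h, one_smul]) θ

end SplitQuat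
end
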